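/- Let A be an M × N complex matrix with rows a₁ᴴ, …, a_Mᴴ, all nonzero, let Φ be the M × M real diagonal matrix with Φ_{ii} = 1/‖a_i‖₂², and set M̃ = AᴴΦA. Let b ∈ ℂ^M, let x* satisfy A x* = b, let x ∈ ℂ^N, set e = x − x*, and let φ = Φ(b − Ax), so φ = −ΦAe. Assume M̃e ≠ 0, and define the aggregation-hyperplane update x' = x + (φᴴ(b − Ax)/‖Aᴴφ‖₂²)·Aᴴφ. Then x' − x* = e − ((eᴴM̃e)/‖M̃e‖₂²)·M̃e and ‖x' − x*‖₂² = ‖e‖₂² − (eᴴM̃e)²/‖M̃e‖₂², where eᴴM̃e is a nonnegative real number. -/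

import Mathlib

open Matrix
open scoped BigOperators

noncomputable section

/-- Hermitian inner product aᴴb = ∑ conj(aₙ)·bₙ on complex vectors. -/
def hIP {ι : Type*} [Fintype ι] (a y : ι → ℂ) : ℂ := ∑ n, (starRingEnd ℂ) (a n) * y n

/-- Squared Euclidean norm of a complex vector. -/
def sqNorm {ι : Type*} [Fintype ι] (a : ι → ℂ) : ℝ := ∑ n, Complex.normSq (a n)

lemma hIP_eq_dot {ι : Type*} [Fintype ι] (a y : ι → ℂ) : hIP a y = star a ⬝ᵥ y := by
  simp [hIP, dotProduct]

lemma hIP_self {ι : Type*} [Fintype ι] (a : ι → ℂ) : hIP a a = ((sqNorm a : ℝ) : ℂ) := by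
  simp only [hIP, sqNorm, Complex.ofReal_sum]
  exact Finset.sum_congr rfl fun n _ => (Complex.normSq_eq_conj_mul_self (z := a n)).symm

lemma hIP_conj {ι : Type*} [Fintype ι] (a y : ι → ℂ) :
    hIP y a = (starRingEnd ℂ) (hIP a y) := by
  simp [hIP, map_sum, _root_.map_mul, mul_comm]

lemma sqNorm_neg {ι : Type*} [Fintype ι] (a : ι → ℂ) : sqNorm (-a) = sqNorm a := by
  simp [sqNorm]

lemma sqNorm_nonneg {ι : Type*} [Fintype ι] (a : ι → ℂ) : 0 ≤ sqNorm a :=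
  Finset.sum_nonneg fun _ _ => Complex.normSq_nonneg _

lemma sqNorm_pos {ι : Type*} [Fintype ι] {a : ι → ℂ} (ha : a ≠ 0) : 0 < sqNorm a := by
  rcases (sqNorm_nonneg a).lt_or_eq with h | h
  · exact h
  · exfalso; apply ha; funext n
    have h2 := (Finset.sum_eq_zero_iff_of_nonneg
      (fun m (_ : m ∈ Finset.univ) => Complex.normSq_nonneg (a m))).mp h.symm
    exact Complex.normSq_eq_zero.mp (h2 n (Finset.mem_univ n))

lemma hIP_expand {ι : Type*} [Fintype ι] (u v : ι → ℂ) (c : ℂ) :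
    hIP (u - c • v) (u - c • v)
      = hIP u u - (starRingEnd ℂ) c * hIP v u - c * hIP u v
        + (starRingEnd ℂ) c * c * hIP v v := by
  simp only [hIP, Pi.sub_apply, Pi.smul_apply, smul_eq_mul, map_sub, _root_.map_mul,
    Finset.mul_sum, ← Finset.sum_sub_distrib, ← Finset.sum_add_distrib]
  exact Finset.sum_congr rfl fun n _ => by ring

/-- The core one-step identity (equation (51)) in the proof of Theorem 5 of the paper.
The rows of A are aᵢᴴ, i.e. aᵢ = star(A i), and Φᵢᵢ = 1/‖aᵢ‖₂². -/
theorem ahk_core_identity (M N : ℕ)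
    (A : Matrix (Fin M) (Fin N) ℂ)
    (hrows : ∀ i : Fin M, (fun n => (starRingEnd ℂ) (A i n)) ≠ (0 : Fin N → ℂ))
    (b : Fin M → ℂ) (xstar : Fin N → ℂ) (hxs : A.mulVec xstar = b)
    (x : Fin N → ℂ)
    (Φ : Matrix (Fin M) (Fin M) ℂ)
    (hΦ : Φ = Matrix.diagonal
      (fun i => (1 : ℂ) / (sqNorm (fun n => (starRingEnd ℂ) (A i n)) : ℂ)))
    (Mt : Matrix (Fin N) (Fin N) ℂ) (hMt : Mt = A.conjTranspose * Φ * A)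
    (e : Fin N → ℂ) (he : e = x - xstar)
    (φ : Fin M → ℂ) (hφ : φ = Φ.mulVec (b - A.mulVec x))
    (hMe : Mt.mulVec e ≠ 0)
    (x' : Fin N → ℂ)
    (hx' : x' = x + ((hIP φ (b - A.mulVec x)) / (sqNorm (A.conjTranspose.mulVec φ) : ℂ))
      • A.conjTranspose.mulVec φ) :
    φ = -(Φ.mulVec (A.mulVec e)) ∧
    (∃ t : ℝ, 0 ≤ t ∧ hIP e (Mt.mulVec e) = (t : ℂ)) ∧
    x' - xstar = e - ((hIP e (Mt.mulVec e)) / (sqNorm (Mt.mulVec e) : ℂ)) • Mt.mulVec e ∧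
    sqNorm (x' - xstar) = sqNorm e - (hIP e (Mt.mulVec e)).re ^ 2 / sqNorm (Mt.mulVec e) := by
  set w : Fin M → ℂ := A.mulVec e with hw
  have hb : b - A.mulVec x = -w := by
    rw [hw, he, Matrix.mulVec_sub, ← hxs]
    abel
  have hφ' : φ = -(Φ.mulVec w) := by
    rw [hφ, hb, Matrix.mulVec_neg]
  have hAφ : A.conjTranspose.mulVec φ = -(Mt.mulVec e) := by
    rw [hφ', Matrix.mulVec_neg, hMt, ← Matrix.mulVec_mulVec, ← Matrix.mulVec_mulVec, ← hw]
  set s : Fin M → ℝ := fun i => sqNorm (fun n => (starRingEnd ℂ) (A i n)) with hs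
  set t : ℝ := ∑ i, (1 / s i) * Complex.normSq (w i) with htdef
  have ht0 : 0 ≤ t :=
    Finset.sum_nonneg fun i _ => mul_nonneg
      (one_div_nonneg.mpr (sqNorm_nonneg _)) (Complex.normSq_nonneg _)
  -- key quadratic-form computation
  have hquad : star w ⬝ᵥ Φ.mulVec w = ((t : ℝ) : ℂ) := by
    rw [hΦ, htdef]
    simp only [dotProduct, Matrix.mulVec_diagonal, Pi.star_apply, Complex.ofReal_sum]
    refine Finset.sum_congr rfl fun i _ => ?_
    rw [show (star (w i) : ℂ) = (starRingEnd ℂ) (w i) from rfl]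
    push_cast
    rw [show ((Complex.normSq (w i) : ℝ) : ℂ) = (starRingEnd ℂ) (w i) * w i from
      Complex.normSq_eq_conj_mul_self]
    ring
  have hipE : hIP e (Mt.mulVec e) = ((t : ℝ) : ℂ) := by
    rw [hIP_eq_dot, hMt, ← Matrix.mulVec_mulVec, ← Matrix.mulVec_mulVec,
      Matrix.dotProduct_mulVec, ← Matrix.star_mulVec, ← hw]
    exact hquad
  have hipφ : hIP φ (b - A.mulVec x) = ((t : ℝ) : ℂ) := by
    rw [hIP_eq_dot, hb, hφ']
    rw [star_neg, neg_dotProduct, dotProduct_neg, neg_neg]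
    rw [hΦ, htdef]
    simp only [dotProduct, Matrix.mulVec_diagonal, Pi.star_apply, Complex.ofReal_sum]
    refine Finset.sum_congr rfl fun i _ => ?_
    rw [show (star ((1 : ℂ) / (s i : ℂ) * w i)) =
      (starRingEnd ℂ) ((1 : ℂ) / (s i : ℂ) * w i) from rfl]
    rw [_root_.map_mul, map_div₀, _root_.map_one, Complex.conj_ofReal]
    push_cast
    rw [show ((Complex.normSq (w i) : ℝ) : ℂ) = (starRingEnd ℂ) (w i) * w i from
      Complex.normSq_eq_conj_mul_self]
    ring
  set v : Fin N → ℂ := Mt.mulVec e with hv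
  have hcpos : 0 < sqNorm v := sqNorm_pos hMe
  have hne : sqNorm v ≠ 0 := ne_of_gt hcpos
  set c : ℂ := hIP e v / (sqNorm v : ℂ) with hc
  have hcreal : c = (((t / sqNorm v : ℝ)) : ℂ) := by
    rw [hc, hipE]; push_cast; ring
  have hthird : x' - xstar = e - c • v := by
    rw [hx', hAφ, sqNorm_neg, hipφ, ← hipE, smul_neg, hc]
    rw [he]
    abel
  refine ⟨hφ', ⟨t, ht0, hipE⟩, hthird, ?_⟩
  have h1 : sqNorm (x' - xstar) = (hIP (x' - xstar) (x' - xstar)).re := by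
    rw [hIP_self]; simp
  rw [h1, hthird, hIP_expand, hIP_self v, hIP_self e, hIP_conj e v, hipE, hcreal]
  simp only [Complex.conj_ofReal]
  push_cast
  simp only [Complex.sub_re, Complex.add_re, Complex.mul_re, Complex.ofReal_re,
    Complex.ofReal_im, mul_zero, sub_zero, zero_mul,
    Complex.div_ofReal_re, Complex.div_ofReal_im, Complex.inv_re, Complex.inv_im,
    Complex.normSq_ofReal, neg_zero, zero_div, add_zero]
  field_simp
  ring
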